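/- arXiv:1202.3800 — 3 statements merged into one kernel-verified Lean document; each statement's English description precedes it below -/
import Mathlib

section
/- Let K : [0,1] × [0,1] → ℝ be a continuous nonnegative kernel such that there exists a constant C with ∫₀¹ K(s,r) ds = C for all r ∈ [0,1]. Let L be the integral operator on L¹(0,1) with kernel K. Then the spectral radius of L equals C, which equals the double integral ∫₀¹ ∫₀¹ K(s,r) dr ds. -/
/-!
The integral functional `φ x = ∫ x` is a left eigenvector of `L` for the eigenvalue `C`:
by Fubini and the constant column integrals, `φ (L x) = C φ x`. Hence `C - L` is not
surjective and `C` lies in the spectrum. Conversely, positivity of the kernel gives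
`‖L x‖₁ ≤ ∫∫ K(s,r) |x r| = C ‖x‖₁`, so `r(L) ≤ ‖L‖ ≤ C`.
-/

open MeasureTheory Set Function

theorem ContinuousLinearMap.mem_spectrum_of_comp_eq_smul {𝕜 E F : Type*} [NormedField 𝕜]
    [NormedAddCommGroup E] [NormedSpace 𝕜 E] [NormedAddCommGroup F] [NormedSpace 𝕜 F]
    {T : E →L[𝕜] E} {φ : E →L[𝕜] F} {c : 𝕜} (hφ : φ ≠ 0) (hφT : φ.comp T = c • φ) :
    c ∈ spectrum 𝕜 T := by
  rintro ⟨u, hu⟩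
  have hφu : φ.comp (u : E →L[𝕜] E) = 0 := by
    rw [hu, comp_sub, hφT, Algebra.algebraMap_eq_smul_one, comp_smul, one_def, comp_id, sub_self]
  refine hφ ?_
  calc φ = φ.comp ((u * u⁻¹ : (E →L[𝕜] E)ˣ) : E →L[𝕜] E) := by
        rw [mul_inv_cancel, Units.val_one, one_def, comp_id]
    _ = 0 := by rw [Units.val_mul, mul_def, ← comp_assoc, hφu, zero_comp]

theorem spectralRadius_eq_of_mem_of_norm_le {𝕜 A : Type*} [NormedField 𝕜] [NormedRing A]
    [NormedAlgebra 𝕜 A] [CompleteSpace A] [NormOneClass A] {a : A} {c : 𝕜}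
    (hc : c ∈ spectrum 𝕜 a) (ha : ‖a‖ ≤ ‖c‖) : spectralRadius 𝕜 a = ‖c‖₊ :=
  le_antisymm ((spectrum.spectralRadius_le_nnnorm a).trans (by exact_mod_cast ha))
    (le_iSup₂ (f := fun k (_ : k ∈ spectrum 𝕜 a) => (‖k‖₊ : ENNReal)) c hc)

theorem L1.integralCLM_apply_eq_integral {α E : Type*} [MeasurableSpace α] {μ : Measure α}
    [NormedAddCommGroup E] [NormedSpace ℝ E] [CompleteSpace E] (f : Lp E 1 μ) :
    L1.integralCLM f = ∫ a, f a ∂μ := by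
  rw [← L1.integral_eq, L1.integral_eq_integral]

section KernelOperator

variable {α : Type*} [MeasurableSpace α] {μ : Measure α} [IsFiniteMeasure μ]
  {K : α → α → ℝ} {M C : ℝ}

theorem integrable_kernel_mul_comp_snd (hKm : AEStronglyMeasurable (uncurry K) (μ.prod μ))
    (hKb : ∀ᵐ p ∂μ.prod μ, ‖K p.1 p.2‖ ≤ M) {g : α → ℝ} (hg : Integrable g μ) :
    Integrable (fun p : α × α => K p.1 p.2 * g p.2) (μ.prod μ) := by
  refine ((integrable_const M).mul_prod hg).norm.mono' (hKm.mul hg.1.comp_snd) ?_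
  filter_upwards [hKb] with p hp
  rw [norm_mul, norm_mul]
  exact mul_le_mul_of_nonneg_right (hp.trans (Real.le_norm_self M)) (norm_nonneg _)

theorem integral_integral_kernel_mul (hKm : AEStronglyMeasurable (uncurry K) (μ.prod μ))
    (hKb : ∀ᵐ p ∂μ.prod μ, ‖K p.1 p.2‖ ≤ M) (hC : ∀ᵐ r ∂μ, ∫ s, K s r ∂μ = C)
    {g : α → ℝ} (hg : Integrable g μ) :
    ∫ s, ∫ r, K s r * g r ∂μ ∂μ = C * ∫ r, g r ∂μ := by
  rw [integral_integral_swap (integrable_kernel_mul_comp_snd hKm hKb hg),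
    ← integral_const_mul]
  refine integral_congr_ae ?_
  filter_upwards [hC] with r hr
  rw [integral_mul_const, hr]

theorem integral_integral_kernel (hKm : AEStronglyMeasurable (uncurry K) (μ.prod μ))
    (hKb : ∀ᵐ p ∂μ.prod μ, ‖K p.1 p.2‖ ≤ M) (hC : ∀ᵐ r ∂μ, ∫ s, K s r ∂μ = C) :
    ∫ s, ∫ r, K s r ∂μ ∂μ = C * μ.real univ := by
  simpa using integral_integral_kernel_mul hKm hKb hC (integrable_const (1 : ℝ))

theorem nonneg_of_integral_kernel_eq [NeZero μ]
    (hKm : AEStronglyMeasurable (uncurry K) (μ.prod μ))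
    (hKb : ∀ᵐ p ∂μ.prod μ, ‖K p.1 p.2‖ ≤ M) (hK0 : ∀ᵐ p ∂μ.prod μ, 0 ≤ K p.1 p.2)
    (hC : ∀ᵐ r ∂μ, ∫ s, K s r ∂μ = C) : 0 ≤ C := by
  have hint : 0 ≤ ∫ s, ∫ r, K s r ∂μ ∂μ := by
    refine integral_nonneg_of_ae ?_
    filter_upwards [Measure.ae_ae_of_ae_prod hK0] with s hs
    exact integral_nonneg_of_ae hs
  rw [integral_integral_kernel hKm hKb hC] at hint
  exact nonneg_of_mul_nonneg_left hint measureReal_univ_pos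

variable {L : Lp ℝ 1 μ →L[ℝ] Lp ℝ 1 μ}

theorem norm_apply_le_of_kernel (hKm : AEStronglyMeasurable (uncurry K) (μ.prod μ))
    (hKb : ∀ᵐ p ∂μ.prod μ, ‖K p.1 p.2‖ ≤ M) (hK0 : ∀ᵐ p ∂μ.prod μ, 0 ≤ K p.1 p.2)
    (hC : ∀ᵐ r ∂μ, ∫ s, K s r ∂μ = C)
    (hL : ∀ x : Lp ℝ 1 μ, ∀ᵐ s ∂μ, L x s = ∫ r, K s r * x r ∂μ) (x : Lp ℝ 1 μ) :
    ‖L x‖ ≤ C * ‖x‖ := by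
  have hx : Integrable (fun r => ‖x r‖) μ := (L1.integrable_coeFn x).norm
  rw [L1.norm_eq_integral_norm, L1.norm_eq_integral_norm,
    ← integral_integral_kernel_mul hKm hKb hC hx]
  refine integral_mono_ae (L1.integrable_coeFn (L x)).norm
    (integrable_kernel_mul_comp_snd hKm hKb hx).integral_prod_left ?_
  filter_upwards [hL x, Measure.ae_ae_of_ae_prod hK0] with s hs hs0
  calc ‖L x s‖ = ‖∫ r, K s r * x r ∂μ‖ := by rw [hs]
    _ ≤ ∫ r, ‖K s r * x r‖ ∂μ := norm_integral_le_integral_norm _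
    _ = ∫ r, K s r * ‖x r‖ ∂μ := by
      refine integral_congr_ae ?_
      filter_upwards [hs0] with r hr
      rw [norm_mul, Real.norm_of_nonneg hr]

theorem L1.integralCLM_comp_eq_smul_of_kernel
    (hKm : AEStronglyMeasurable (uncurry K) (μ.prod μ))
    (hKb : ∀ᵐ p ∂μ.prod μ, ‖K p.1 p.2‖ ≤ M) (hC : ∀ᵐ r ∂μ, ∫ s, K s r ∂μ = C)
    (hL : ∀ x : Lp ℝ 1 μ, ∀ᵐ s ∂μ, L x s = ∫ r, K s r * x r ∂μ) :
    L1.integralCLM.comp L = C • L1.integralCLM := by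
  ext x
  simp only [ContinuousLinearMap.comp_apply, smul_apply, smul_eq_mul,
    L1.integralCLM_apply_eq_integral, integral_congr_ae (hL x)]
  exact integral_integral_kernel_mul hKm hKb hC (L1.integrable_coeFn x)

theorem L1.integralCLM_ne_zero [NeZero μ] : (L1.integralCLM : Lp ℝ 1 μ →L[ℝ] ℝ) ≠ 0 := by
  refine DFunLike.ne_iff.mpr ⟨Lp.const 1 μ (1 : ℝ), ?_⟩
  rw [L1.integralCLM_apply_eq_integral, integral_congr_ae (Lp.coeFn_const 1 μ (1 : ℝ))]
  simpa using measureReal_univ_pos.ne'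

theorem spectralRadius_eq_of_kernel [NeZero μ]
    (hKm : AEStronglyMeasurable (uncurry K) (μ.prod μ))
    (hKb : ∀ᵐ p ∂μ.prod μ, ‖K p.1 p.2‖ ≤ M) (hK0 : ∀ᵐ p ∂μ.prod μ, 0 ≤ K p.1 p.2)
    (hC : ∀ᵐ r ∂μ, ∫ s, K s r ∂μ = C)
    (hL : ∀ x : Lp ℝ 1 μ, ∀ᵐ s ∂μ, L x s = ∫ r, K s r * x r ∂μ) :
    spectralRadius ℝ L = ENNReal.ofReal C := by
  have hC0 : 0 ≤ C := nonneg_of_integral_kernel_eq hKm hKb hK0 hC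
  have : Nontrivial (Lp ℝ 1 μ) := by
    by_contra h
    rw [not_nontrivial_iff_subsingleton] at h
    exact L1.integralCLM_ne_zero (μ := μ) (Subsingleton.elim _ 0)
  rw [← Real.enorm_eq_ofReal hC0]
  refine spectralRadius_eq_of_mem_of_norm_le ?_ ?_
  · exact ContinuousLinearMap.mem_spectrum_of_comp_eq_smul L1.integralCLM_ne_zero
      (L1.integralCLM_comp_eq_smul_of_kernel hKm hKb hC hL)
  · rw [Real.norm_of_nonneg hC0]
    exact L.opNorm_le_bound hC0 (norm_apply_le_of_kernel hKm hKb hK0 hC hL)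

end KernelOperator

theorem stmt_2 (K : ℝ → ℝ → ℝ) (C : ℝ)
    (hKc : ContinuousOn (fun p : ℝ × ℝ => K p.1 p.2) (Icc 0 1 ×ˢ Icc 0 1))
    (hK0 : ∀ s ∈ Icc (0:ℝ) 1, ∀ r ∈ Icc (0:ℝ) 1, 0 ≤ K s r)
    (hC : ∀ r ∈ Icc (0:ℝ) 1, ∫ s in Icc (0:ℝ) 1, K s r = C)
    (L : Lp ℝ 1 (volume.restrict (Icc (0:ℝ) 1)) →L[ℝ]
         Lp ℝ 1 (volume.restrict (Icc (0:ℝ) 1)))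
    (hL : ∀ x : Lp ℝ 1 (volume.restrict (Icc (0:ℝ) 1)),
        ∀ᵐ s ∂(volume.restrict (Icc (0:ℝ) 1)),
          (L x : ℝ → ℝ) s = ∫ r in Icc (0:ℝ) 1, K s r * x r) :
    spectralRadius ℝ L = ENNReal.ofReal C ∧
      C = ∫ s in Icc (0:ℝ) 1, ∫ r in Icc (0:ℝ) 1, K s r := by
  set μ := volume.restrict (Icc (0:ℝ) 1)
  have : IsProbabilityMeasure μ := ⟨by simp [μ, Real.volume_Icc]⟩
  have hsquare : MeasurableSet (Icc (0:ℝ) 1 ×ˢ Icc (0:ℝ) 1) :=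
    measurableSet_Icc.prod measurableSet_Icc
  have hμμ : μ.prod μ = volume.restrict (Icc (0:ℝ) 1 ×ˢ Icc (0:ℝ) 1) := by
    rw [Measure.prod_restrict, Measure.volume_eq_prod]
  obtain ⟨M, hM⟩ := (isCompact_Icc.prod isCompact_Icc).exists_bound_of_continuousOn hKc
  have hKm : AEStronglyMeasurable (uncurry K) (μ.prod μ) :=
    hμμ ▸ hKc.aestronglyMeasurable hsquare
  have hKb : ∀ᵐ p ∂μ.prod μ, ‖K p.1 p.2‖ ≤ M := hμμ ▸ ae_restrict_of_forall_mem hsquare hM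
  have hK0' : ∀ᵐ p ∂μ.prod μ, 0 ≤ K p.1 p.2 :=
    hμμ ▸ ae_restrict_of_forall_mem hsquare fun p hp => hK0 p.1 hp.1 p.2 hp.2
  have hC' : ∀ᵐ r ∂μ, ∫ s, K s r ∂μ = C := ae_restrict_of_forall_mem measurableSet_Icc hC
  refine ⟨spectralRadius_eq_of_kernel hKm hKb hK0' hC' hL, ?_⟩
  rw [integral_integral_kernel hKm hKb hC', probReal_univ, mul_one]
end

section
/- Let K : [0,1] × [0,1] → ℝ be a continuous nonnegative kernel such that there exists a constant C* with ∫₀¹ K(s,r) dr = C* for all s ∈ [0,1]. Let L be the integral operator on L¹(0,1) with kernel K. Then the spectral radius of L equals C*, which equals ∫₀¹ ∫₀¹ K(s,r) dr ds. -/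
/-!
The constant function `1` is an eigenvector of `L` with eigenvalue `C*`, because every row of the
kernel integrates to `C*`; hence `C* ≤ r(L)`. Conversely, a bound `|K| ≤ B` makes `L` map `L¹`
into `L∞` with norm at most `B`, and a nonnegative kernel with row integrals `C*` maps `L∞` into
itself with norm at most `C*`. So `‖Lⁿ⁺¹‖ ≤ B C*ⁿ` on `L¹`, and every spectral value `k` satisfies
`|k|ⁿ⁺¹ ≤ ‖Lⁿ⁺¹‖ ≤ B C*ⁿ` for all `n`, which forces `|k| ≤ C*`.
-/

open MeasureTheory Set Filter
open scoped ENNReal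

theorem le_of_forall_pow_succ_le_mul_pow {x B C : ℝ} (hC : 0 ≤ C)
    (h : ∀ n : ℕ, x ^ (n + 1) ≤ B * C ^ n) : x ≤ C := by
  by_contra! hCx
  have hx : 0 < x := hC.trans_lt hCx
  have hratio : Tendsto (fun n : ℕ => B * (C / x) ^ n) atTop (nhds 0) := by
    simpa using (tendsto_pow_atTop_nhds_zero_of_lt_one (div_nonneg hC hx.le)
      ((div_lt_one hx).2 hCx)).const_mul B
  obtain ⟨n, hn⟩ := (hratio.eventually (gt_mem_nhds hx)).exists
  have := calc x ^ (n + 1) ≤ B * C ^ n := h n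
    _ = B * (C / x) ^ n * x ^ n := by
      rw [div_pow, mul_assoc, div_mul_cancel₀ _ (pow_ne_zero n hx.ne')]
    _ < x * x ^ n := mul_lt_mul_of_pos_right hn (pow_pos hx n)
    _ = x ^ (n + 1) := (pow_succ' x n).symm
  exact this.false

theorem spectralRadius_le_of_norm_pow_succ_le {𝕜 A : Type*} [NormedField 𝕜] [NormedRing A]
    [NormedAlgebra 𝕜 A] [CompleteSpace A] {a : A} {B C : ℝ} (hC : 0 ≤ C)
    (h : ∀ n : ℕ, ‖a ^ (n + 1)‖ ≤ B * C ^ n) : spectralRadius 𝕜 a ≤ ENNReal.ofReal C := by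
  refine iSup₂_le fun k hk => ?_
  rw [← ENNReal.ofReal_coe_nnreal, coe_nnnorm]
  refine ENNReal.ofReal_le_ofReal (le_of_forall_pow_succ_le_mul_pow (B := B * ‖(1 : A)‖) hC
    fun n => ?_)
  calc ‖k‖ ^ (n + 1) = ‖k ^ (n + 1)‖ := (norm_pow k (n + 1)).symm
    _ ≤ ‖a ^ (n + 1)‖ * ‖(1 : A)‖ :=
      spectrum.norm_le_norm_mul_of_mem (spectrum.pow_mem_pow a _ hk)
    _ ≤ B * C ^ n * ‖(1 : A)‖ := mul_le_mul_of_nonneg_right (h n) (norm_nonneg _)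
    _ = B * ‖(1 : A)‖ * C ^ n := by ring

namespace ContinuousLinearMap

variable {𝕜 E : Type*} [NormedField 𝕜] [NormedAddCommGroup E] [NormedSpace 𝕜 E]
  {T : E →L[𝕜] E} {c : 𝕜} {u : E}

theorem mem_spectrum_of_apply_eq_smul (hu : u ≠ 0) (hTu : T u = c • u) : c ∈ spectrum 𝕜 T := by
  rintro ⟨v, hv⟩
  have hker : (algebraMap 𝕜 (E →L[𝕜] E) c - T) u = 0 := by
    simp [Algebra.algebraMap_eq_smul_one, hTu]
  apply hu
  simpa [hv, hker] using congr($(v.inv_mul) u).symm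

theorem nnnorm_le_spectralRadius_of_apply_eq_smul (hu : u ≠ 0) (hTu : T u = c • u) :
    (‖c‖₊ : ℝ≥0∞) ≤ spectralRadius 𝕜 T :=
  le_iSup₂ (f := fun k (_ : k ∈ spectrum 𝕜 T) => (‖k‖₊ : ℝ≥0∞)) c
    (mem_spectrum_of_apply_eq_smul hu hTu)

end ContinuousLinearMap

namespace MeasureTheory

variable {α : Type*} [MeasurableSpace α] {μ : Measure α}

def HasIntegralKernel (L : Lp ℝ 1 μ →L[ℝ] Lp ℝ 1 μ) (K : α → α → ℝ) : Prop :=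
  ∀ x : Lp ℝ 1 μ, ∀ᵐ s ∂μ, L x s = ∫ r, K s r * x r ∂μ

namespace HasIntegralKernel

variable {L : Lp ℝ 1 μ →L[ℝ] Lp ℝ 1 μ} {K : α → α → ℝ} {B C : ℝ}

theorem ae_norm_apply_le_of_bound (hL : HasIntegralKernel L K)
    (hB : ∀ᵐ s ∂μ, ∀ᵐ r ∂μ, ‖K s r‖ ≤ B) (x : Lp ℝ 1 μ) :
    ∀ᵐ s ∂μ, ‖L x s‖ ≤ B * ‖x‖ := by
  filter_upwards [hL x, hB] with s hLs hBs
  calc ‖L x s‖ ≤ ∫ r, ‖K s r * x r‖ ∂μ := hLs ▸ norm_integral_le_integral_norm _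
    _ ≤ ∫ r, B * ‖x r‖ ∂μ := by
      refine integral_mono_of_nonneg (.of_forall fun r => norm_nonneg _)
        ((L1.integrable_coeFn x).norm.const_mul B) ?_
      filter_upwards [hBs] with r hr
      rw [norm_mul]
      exact mul_le_mul_of_nonneg_right hr (norm_nonneg _)
    _ = B * ‖x‖ := by rw [integral_const_mul, ← L1.norm_eq_integral_norm]

theorem ae_norm_apply_le_of_ae_norm_le (hL : HasIntegralKernel L K)
    (hK0 : ∀ᵐ s ∂μ, ∀ᵐ r ∂μ, 0 ≤ K s r) (hKi : ∀ᵐ s ∂μ, Integrable (K s) μ)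
    (hC : ∀ᵐ s ∂μ, ∫ r, K s r ∂μ = C) {y : Lp ℝ 1 μ} {M : ℝ} (hy : ∀ᵐ r ∂μ, ‖y r‖ ≤ M) :
    ∀ᵐ s ∂μ, ‖L y s‖ ≤ C * M := by
  filter_upwards [hL y, hK0, hKi, hC] with s hLs hK0s hKis hCs
  calc ‖L y s‖ ≤ ∫ r, ‖K s r * y r‖ ∂μ := hLs ▸ norm_integral_le_integral_norm _
    _ ≤ ∫ r, K s r * M ∂μ := by
      refine integral_mono_of_nonneg (.of_forall fun r => norm_nonneg _) (hKis.mul_const M) ?_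
      filter_upwards [hK0s, hy] with r hKr hyr
      rw [norm_mul, Real.norm_of_nonneg hKr]
      exact mul_le_mul_of_nonneg_left hyr hKr
    _ = C * M := by rw [integral_mul_const, hCs]

theorem ae_norm_pow_succ_apply_le (hL : HasIntegralKernel L K)
    (hK0 : ∀ᵐ s ∂μ, ∀ᵐ r ∂μ, 0 ≤ K s r) (hKi : ∀ᵐ s ∂μ, Integrable (K s) μ)
    (hC : ∀ᵐ s ∂μ, ∫ r, K s r ∂μ = C) (hB : ∀ᵐ s ∂μ, ∀ᵐ r ∂μ, ‖K s r‖ ≤ B)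
    (n : ℕ) (x : Lp ℝ 1 μ) : ∀ᵐ s ∂μ, ‖(L ^ (n + 1)) x s‖ ≤ C ^ n * (B * ‖x‖) := by
  induction n with
  | zero => simpa using hL.ae_norm_apply_le_of_bound hB x
  | succ n ih =>
    rw [pow_succ' L, pow_succ' C, mul_assoc]
    exact hL.ae_norm_apply_le_of_ae_norm_le hK0 hKi hC ih

theorem norm_pow_succ_le [IsFiniteMeasure μ] (hL : HasIntegralKernel L K)
    (hK0 : ∀ᵐ s ∂μ, ∀ᵐ r ∂μ, 0 ≤ K s r) (hKi : ∀ᵐ s ∂μ, Integrable (K s) μ)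
    (hC : ∀ᵐ s ∂μ, ∫ r, K s r ∂μ = C) (hB : ∀ᵐ s ∂μ, ∀ᵐ r ∂μ, ‖K s r‖ ≤ B)
    (hC0 : 0 ≤ C) (hB0 : 0 ≤ B) (n : ℕ) :
    ‖L ^ (n + 1)‖ ≤ measureUnivNNReal μ * B * C ^ n := by
  refine ContinuousLinearMap.opNorm_le_bound _ (by positivity) fun x => ?_
  have := Lp.norm_le_of_ae_bound (by positivity) (hL.ae_norm_pow_succ_apply_le hK0 hKi hC hB n x)
  simpa [mul_assoc, mul_comm, mul_left_comm] using this

theorem apply_const_one [IsFiniteMeasure μ] (hL : HasIntegralKernel L K)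
    (hC : ∀ᵐ s ∂μ, ∫ r, K s r ∂μ = C) :
    L (Lp.const 1 μ 1) = C • Lp.const 1 μ (1 : ℝ) := by
  have h1 := Lp.coeFn_const 1 μ (1 : ℝ)
  apply Lp.ext
  filter_upwards [hL (Lp.const 1 μ 1), hC, Lp.coeFn_smul C (Lp.const 1 μ (1 : ℝ)), h1]
    with s hLs hCs hsmul h1s
  have hint : ∫ r, K s r * Lp.const 1 μ (1 : ℝ) r ∂μ = ∫ r, K s r ∂μ :=
    integral_congr_ae (h1.mono fun r hr => by simp only [hr, Function.const_apply, mul_one])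
  rw [hLs, hsmul, Pi.smul_apply, h1s, hint, hCs, Function.const_apply, smul_eq_mul, mul_one]

theorem spectralRadius_eq [IsFiniteMeasure μ] [NeZero μ] (hL : HasIntegralKernel L K)
    (hK0 : ∀ᵐ s ∂μ, ∀ᵐ r ∂μ, 0 ≤ K s r) (hKi : ∀ᵐ s ∂μ, Integrable (K s) μ)
    (hC : ∀ᵐ s ∂μ, ∫ r, K s r ∂μ = C) (hB : ∀ᵐ s ∂μ, ∀ᵐ r ∂μ, ‖K s r‖ ≤ B) :
    spectralRadius ℝ L = ENNReal.ofReal C := by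
  have hC0 : 0 ≤ C := by
    obtain ⟨s, hCs, hK0s⟩ := (hC.and hK0).exists
    exact hCs ▸ integral_nonneg_of_ae hK0s
  have hB0 : 0 ≤ B := by
    obtain ⟨s, hBs⟩ := hB.exists
    obtain ⟨r, hr⟩ := hBs.exists
    exact (norm_nonneg _).trans hr
  have hone : Lp.const 1 μ (1 : ℝ) ≠ 0 := by
    rw [← norm_pos_iff, Lp.norm_const 1 μ 1 one_ne_zero]
    simp [measureReal_univ_pos]
  refine le_antisymm (spectralRadius_le_of_norm_pow_succ_le hC0
    (hL.norm_pow_succ_le hK0 hKi hC hB hC0 hB0)) ?_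
  have := L.nnnorm_le_spectralRadius_of_apply_eq_smul hone (hL.apply_const_one hC)
  rwa [← ENNReal.ofReal_coe_nnreal, coe_nnnorm, Real.norm_of_nonneg hC0] at this

end HasIntegralKernel

end MeasureTheory

theorem stmt_3 (K : ℝ → ℝ → ℝ) (Cstar : ℝ)
    (hKc : ContinuousOn (fun p : ℝ × ℝ => K p.1 p.2) (Icc 0 1 ×ˢ Icc 0 1))
    (hK0 : ∀ s ∈ Icc (0:ℝ) 1, ∀ r ∈ Icc (0:ℝ) 1, 0 ≤ K s r)
    (hC : ∀ s ∈ Icc (0:ℝ) 1, ∫ r in Icc (0:ℝ) 1, K s r = Cstar)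
    (L : Lp ℝ 1 (volume.restrict (Icc (0:ℝ) 1)) →L[ℝ]
         Lp ℝ 1 (volume.restrict (Icc (0:ℝ) 1)))
    (hL : ∀ x : Lp ℝ 1 (volume.restrict (Icc (0:ℝ) 1)),
        ∀ᵐ s ∂(volume.restrict (Icc (0:ℝ) 1)),
          (L x : ℝ → ℝ) s = ∫ r in Icc (0:ℝ) 1, K s r * x r) :
    spectralRadius ℝ L = ENNReal.ofReal Cstar ∧
      Cstar = ∫ s in Icc (0:ℝ) 1, ∫ r in Icc (0:ℝ) 1, K s r := by
  have : NeZero (volume.restrict (Icc (0:ℝ) 1)) := ⟨by simp⟩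
  have ae_of_forall {P : ℝ → ℝ → Prop} (h : ∀ s ∈ Icc (0:ℝ) 1, ∀ r ∈ Icc (0:ℝ) 1, P s r) :
      ∀ᵐ s ∂(volume.restrict (Icc (0:ℝ) 1)), ∀ᵐ r ∂(volume.restrict (Icc (0:ℝ) 1)), P s r :=
    ae_restrict_of_forall_mem measurableSet_Icc fun s hs =>
      ae_restrict_of_forall_mem measurableSet_Icc (h s hs)
  obtain ⟨B, hB⟩ := (isCompact_Icc.prod isCompact_Icc).exists_bound_of_continuousOn hKc
  have hKi : ∀ s ∈ Icc (0:ℝ) 1, IntegrableOn (K s) (Icc 0 1) :=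
    fun s hs => (hKc.comp (Continuous.prodMk_right s).continuousOn fun _ hr => ⟨hs, hr⟩)
      |>.integrableOn_compact isCompact_Icc
  refine ⟨HasIntegralKernel.spectralRadius_eq hL (ae_of_forall hK0)
    (ae_restrict_of_forall_mem measurableSet_Icc hKi)
    (ae_restrict_of_forall_mem measurableSet_Icc hC)
    (ae_of_forall fun s hs r hr => hB (s, r) ⟨hs, hr⟩), ?_⟩
  rw [setIntegral_congr_fun measurableSet_Icc hC]
  simp
end

section
/- Let A be an n × n matrix with strictly positive real entries and spectral radius ρ(A) = 1. Then 1 is an eigenvalue of A and there exists a vector v ∈ ℝⁿ with all entries strictly positive such that A v = v. -/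
/-- The spectral radius of a real square matrix: the supremum of the moduli of
its complex eigenvalues. -/
noncomputable def specRad {n : ℕ} (M : Matrix (Fin n) (Fin n) ℝ) : ℝ :=
  sSup ((fun z : ℂ => ‖z‖) '' spectrum ℂ (M.map (fun x => (x : ℂ))))

/-! Collatz–Wielandt argument. On the compact set of pairs `(t, x)` with `x` in the standard
simplex and `t • x ≤ A *ᵥ x`, the largest `t` is attained, say at `(r, v)`. If `A v ≠ r v`,
positivity of `A` gives `A (A v) > r (A v)` in every coordinate, so a slightly larger `t` works
for `A v`; hence `A v = r v`. For a complex eigenpair `(μ, z)` the triangle inequality gives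
`|μ| |z| ≤ A |z|` coordinatewise, so `|μ| ≤ r`. Thus `r` is the spectral radius, i.e. `r = 1`,
and then `v = A v` is strictly positive. -/

open Finset Filter

namespace Matrix

variable {ι : Type*} [Fintype ι]

theorem mem_spectrum_iff_exists_mulVec_eq_smul {K : Type*} [Field K] [DecidableEq ι]
    (M : Matrix ι ι K) (μ : K) : μ ∈ spectrum K M ↔ ∃ v ≠ 0, M *ᵥ v = μ • v := by
  simp only [← spectrum_toLin', ← Module.End.hasEigenvalue_iff_mem_spectrum,
    Module.End.hasEigenvalue_iff, Submodule.ne_bot_iff, Module.End.mem_eigenspace_iff,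
    toLin'_apply]
  tauto

theorem ofReal_mem_spectrum_map [DecidableEq ι] {A : Matrix ι ι ℝ} {μ : ℝ}
    (hμ : μ ∈ spectrum ℝ A) : (μ : ℂ) ∈ spectrum ℂ (A.map (fun x => (x : ℂ))) := by
  obtain ⟨v, hv, hAv⟩ := (mem_spectrum_iff_exists_mulVec_eq_smul A μ).1 hμ
  refine (mem_spectrum_iff_exists_mulVec_eq_smul _ _).2
    ⟨fun i => (v i : ℂ), fun h => hv (funext fun i => by simpa using congrFun h i), ?_⟩
  funext i
  have h := RingHom.map_mulVec Complex.ofRealHom A v i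
  rw [hAv] at h
  exact h.symm.trans (by simp)

variable {A : Matrix ι ι ℝ}

theorem mulVec_nonneg_of_nonneg (hA : ∀ i j, 0 ≤ A i j) {x : ι → ℝ} (hx : 0 ≤ x) :
    0 ≤ A *ᵥ x :=
  fun i => sum_nonneg fun j _ => mul_nonneg (hA i j) (hx j)

theorem mulVec_apply_pos (hA : ∀ i j, 0 < A i j) {x : ι → ℝ} (hx : 0 ≤ x) (hx0 : x ≠ 0)
    (i : ι) : 0 < (A *ᵥ x) i := by
  obtain ⟨j, hj⟩ := Function.ne_iff.1 hx0
  exact sum_pos' (fun k _ => mul_nonneg (hA i k).le (hx k))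
    ⟨j, mem_univ j, mul_pos (hA i j) ((hx j).lt_of_ne' hj)⟩

theorem le_sum_sum_of_smul_le_mulVec (hA : ∀ i j, 0 ≤ A i j) {x : ι → ℝ}
    (hx : x ∈ stdSimplex ℝ ι) {t : ℝ} (htx : t • x ≤ A *ᵥ x) : t ≤ ∑ i, ∑ j, A i j :=
  calc t = ∑ i, t * x i := by rw [← mul_sum, hx.2, mul_one]
    _ ≤ ∑ i, (A *ᵥ x) i := sum_le_sum fun i _ => htx i
    _ ≤ ∑ i, ∑ j, A i j := sum_le_sum fun i _ => sum_le_sum fun j _ =>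
      mul_le_of_le_one_right (hA i j) (mem_Icc_of_mem_stdSimplex hx j).2

def collatzWielandtSet (A : Matrix ι ι ℝ) : Set ℝ :=
  {t | ∃ x, 0 ≤ x ∧ x ≠ 0 ∧ t • x ≤ A *ᵥ x}

theorem exists_isGreatest_collatzWielandtSet [Nonempty ι] (hA : ∀ i j, 0 ≤ A i j) :
    ∃ r, IsGreatest (collatzWielandtSet A) r := by
  classical
  set K := {p : ℝ × (ι → ℝ) | p.2 ∈ stdSimplex ℝ ι ∧ 0 ≤ p.1 ∧ p.1 • p.2 ≤ A *ᵥ p.2}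
  have hK_closed : IsClosed K :=
    ((isClosed_stdSimplex ℝ ι).preimage continuous_snd).inter
      ((isClosed_le continuous_const continuous_fst).inter
        (isClosed_le (f := fun p : ℝ × (ι → ℝ) => p.1 • p.2) (g := fun p => A *ᵥ p.2)
          (by fun_prop) (continuous_const.matrix_mulVec continuous_snd)))
  have hK : IsCompact K :=
    (isCompact_Icc.prod (isCompact_stdSimplex ℝ ι)).of_isClosed_subset hK_closed
      fun _ ⟨hx, ht, htx⟩ => ⟨⟨ht, le_sum_sum_of_smul_le_mulVec hA hx htx⟩, hx⟩
  have hK₀ : (0, Pi.single (Classical.arbitrary ι) 1) ∈ K :=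
    ⟨single_mem_stdSimplex ℝ _, le_rfl, by
      simpa using mulVec_nonneg_of_nonneg hA (Pi.single_nonneg.2 zero_le_one)⟩
  obtain ⟨⟨r, v⟩, ⟨hv, hr, hrv⟩, hmax⟩ :=
    hK.exists_isMaxOn ⟨_, hK₀⟩ continuous_fst.continuousOn
  refine ⟨r, ⟨v, hv.1, fun h => by simpa [h] using hv.2, hrv⟩, ?_⟩
  rintro t ⟨x, hx, hx0, htx⟩
  obtain ht | ht := le_or_gt t 0
  · exact ht.trans hr
  have hs : 0 < ∑ i, x i := by
    obtain ⟨j, hj⟩ := Function.ne_iff.1 hx0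
    exact sum_pos' (fun i _ => hx i) ⟨j, mem_univ j, (hx j).lt_of_ne' hj⟩
  refine hmax (show (t, (∑ i, x i)⁻¹ • x) ∈ K from ⟨⟨?_, ?_⟩, ht.le, ?_⟩)
  · exact smul_nonneg (inv_nonneg.2 hs.le) hx
  · simp only [Pi.smul_apply, smul_eq_mul, ← mul_sum, inv_mul_cancel₀ hs.ne']
  · rw [smul_comm, mulVec_smul]
    exact smul_le_smul_of_nonneg_left htx (inv_nonneg.2 hs.le)

theorem mulVec_eq_smul_of_mem_upperBounds (hA : ∀ i j, 0 < A i j) {r : ℝ}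
    (hr : r ∈ upperBounds (collatzWielandtSet A)) {v : ι → ℝ} (hv : 0 ≤ v) (hv0 : v ≠ 0)
    (hrv : r • v ≤ A *ᵥ v) : A *ᵥ v = r • v := by
  by_contra hne
  set w := A *ᵥ v
  have hw : ∀ i, 0 < w i := mulVec_apply_pos hA hv hv0
  have hrw : ∀ i, r * w i < (A *ᵥ w) i := fun i => by
    simpa [w, mulVec_sub, mulVec_smul] using
      mulVec_apply_pos hA (sub_nonneg.2 hrv) (sub_ne_zero.2 hne) i
  obtain ⟨t, hrt, htw⟩ : ∃ t, r < t ∧ ∀ i, t * w i < (A *ᵥ w) i :=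
    (eventually_all.2 fun i => (continuous_mul_const (w i)).continuousAt.eventually_lt
      continuousAt_const (hrw i)).exists_gt
  obtain ⟨j, -⟩ := Function.ne_iff.1 hv0
  exact hrt.not_ge (hr ⟨w, fun i => (hw i).le, Function.ne_iff.2 ⟨j, (hw j).ne'⟩,
    fun i => (htw i).le⟩)

theorem norm_le_of_mem_spectrum_map [DecidableEq ι] (hA : ∀ i j, 0 ≤ A i j) {r : ℝ}
    (hr : r ∈ upperBounds (collatzWielandtSet A)) {μ : ℂ}
    (hμ : μ ∈ spectrum ℂ (A.map (fun x => (x : ℂ)))) : ‖μ‖ ≤ r := by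
  obtain ⟨z, hz, hAz⟩ := (mem_spectrum_iff_exists_mulVec_eq_smul _ μ).1 hμ
  refine hr ⟨fun i => ‖z i‖, fun i => norm_nonneg _,
    fun h => hz (funext fun i => norm_eq_zero.1 (congrFun h i)), fun i => ?_⟩
  calc ‖μ‖ * ‖z i‖ = ‖(A.map (fun x => (x : ℂ)) *ᵥ z) i‖ := by
        rw [hAz, Pi.smul_apply, smul_eq_mul, norm_mul]
    _ ≤ ∑ j, ‖(A i j : ℂ) * z j‖ := norm_sum_le _ _
    _ = (A *ᵥ fun j => ‖z j‖) i := sum_congr rfl fun j _ => by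
        rw [norm_mul, Complex.norm_real, Real.norm_of_nonneg (hA i j)]

end Matrix

open Matrix

theorem specRad_eq_of_mem_spectrum {n : ℕ} {A : Matrix (Fin n) (Fin n) ℝ} {r : ℝ}
    (hr : r ∈ spectrum ℝ A)
    (hbound : ∀ μ ∈ spectrum ℂ (A.map (fun x => (x : ℂ))), ‖μ‖ ≤ r) : specRad A = r := by
  have hrC := ofReal_mem_spectrum_map hr
  have hr0 : 0 ≤ r := (norm_nonneg _).trans (hbound _ hrC)
  refine IsGreatest.csSup_eq ⟨⟨r, hrC, by simp [hr0]⟩, ?_⟩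
  rintro _ ⟨μ, hμ, rfl⟩
  exact hbound μ hμ

theorem stmt_11 (n : ℕ) (A : Matrix (Fin n) (Fin n) ℝ)
    (hpos : ∀ i j, 0 < A i j) (hρ : specRad A = 1) :
    (1 : ℝ) ∈ spectrum ℝ A ∧
      ∃ v : Fin n → ℝ, (∀ i, 0 < v i) ∧ A.mulVec v = v := by
  cases isEmpty_or_nonempty (Fin n)
  · simp [specRad, spectrum.of_subsingleton] at hρ
  have hA : ∀ i j, 0 ≤ A i j := fun i j => (hpos i j).le
  obtain ⟨r, hr⟩ := exists_isGreatest_collatzWielandtSet hA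
  obtain ⟨v, hv, hv0, hrv⟩ := hr.1
  have hAv := mulVec_eq_smul_of_mem_upperBounds hpos hr.2 hv hv0 hrv
  have hr_spec : r ∈ spectrum ℝ A := (mem_spectrum_iff_exists_mulVec_eq_smul A r).2 ⟨v, hv0, hAv⟩
  have hspec : specRad A = r :=
    specRad_eq_of_mem_spectrum hr_spec fun _ => norm_le_of_mem_spectrum_map hA hr.2
  obtain rfl : r = 1 := hspec.symm.trans hρ
  rw [one_smul] at hAv
  exact ⟨hr_spec, v, fun i => hAv ▸ mulVec_apply_pos hpos hv hv0 i, hAv⟩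
end
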